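/- Let T be a closed, symmetric, G-invariant operator with equal deficiency indices, and let T_K be the self-adjoint extension defined by a unitary K : N₊ → N₋. If T_K is G-invariant, then K commutes with the group action: V(g)Kξ = K V(g)ξ for all ξ ∈ N₊, g ∈ G. -/

import Mathlib

/-!
`V g` commutes with `T†` and hence preserves `N₊` and `N₋`. Applying `V g` to `ξ + Kξ ∈ D(T_K)`
gives an element `φ + η + Kη` of `D(T_K)`, so `(V g ξ - η) + (V g Kξ - Kη) = φ ∈ D(T)`.
The sum `D(T) + N₊ + N₋` is direct, because on `D(T)` the operator `T† = T` is symmetric while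
`N₊`, `N₋` are eigenspaces of `T†` for the non-real eigenvalues `±i`. Hence `V g ξ = η` and
`V g Kξ = Kη = K (V g ξ)`.
-/

open scoped InnerProductSpace
open LinearPMap

/-- `G`-invariance of a (possibly unbounded) operator `T` with respect to a unitary
representation `V`. -/
def GInvariant {H : Type*} [NormedAddCommGroup H] [InnerProductSpace ℂ H]
    {G : Type*} [Group G] (V : G →* (H ≃ₗᵢ[ℂ] H)) (T : H →ₗ.[ℂ] H) : Prop :=
  ∀ g : G, ∀ x : T.domain, ∃ hx : V g (x : H) ∈ T.domain,
    T ⟨V g (x : H), hx⟩ = V g (T x)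

/-- The deficiency space `ker (T† - c)` of an unbounded operator, as a set. -/
def deficiencySpace {H : Type*} [NormedAddCommGroup H] [InnerProductSpace ℂ H]
    [CompleteSpace H] (T : H →ₗ.[ℂ] H) (c : ℂ) : Set H :=
  {φ : H | ∃ hφ : φ ∈ T.adjoint.domain, T.adjoint ⟨φ, hφ⟩ = c • φ}

section

variable {H : Type*} [NormedAddCommGroup H] [InnerProductSpace ℂ H] [CompleteSpace H]
  {G : Type*} [Group G] {V : G →* (H ≃ₗᵢ[ℂ] H)} {T : H →ₗ.[ℂ] H}

theorem GInvariant.adjoint (hinv : GInvariant V T) (hdense : Dense (T.domain : Set H)) :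
    GInvariant V T.adjoint := by
  intro g ψ
  have hflip : ∀ x y : H, ⟪V g x, y⟫_ℂ = ⟪x, V g⁻¹ y⟫_ℂ := fun x y => by
    rw [LinearIsometryEquiv.inner_map_eq_flip, map_inv, LinearIsometryEquiv.coe_inv]
  have key : ∀ x : T.domain, ⟪V g (T.adjoint ψ), (x : H)⟫_ℂ = ⟪V g ψ, T x⟫_ℂ := by
    intro x
    obtain ⟨hx, hTx⟩ := hinv g⁻¹ x
    calc ⟪V g (T.adjoint ψ), (x : H)⟫_ℂ = ⟪T.adjoint ψ, V g⁻¹ x⟫_ℂ := hflip _ _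
      _ = ⟪(ψ : H), T ⟨V g⁻¹ x, hx⟩⟫_ℂ := adjoint_isFormalAdjoint hdense ψ ⟨_, hx⟩
      _ = ⟪V g ψ, T x⟫_ℂ := by rw [hTx, hflip]
  exact ⟨mem_adjoint_domain_of_exists _ ⟨_, key⟩, adjoint_apply_eq hdense _ key⟩

theorem GInvariant.mapsTo_deficiencySpace (hinv : GInvariant V T.adjoint) (g : G) (c : ℂ) :
    Set.MapsTo (V g) (deficiencySpace T c) (deficiencySpace T c) := by
  rintro φ ⟨hφdom, hφc⟩
  obtain ⟨hdom, hval⟩ := hinv g ⟨φ, hφdom⟩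
  exact ⟨hdom, by rw [hval, hφc, _root_.map_smul]⟩

theorem eq_zero_of_add_mem_domain_of_mem_deficiencySpace (hdense : Dense (T.domain : Set H))
    (hsymm : T.IsFormalAdjoint T) {c : ℂ} (hc : c.im ≠ 0) {ζ ζ' : H}
    (hζ : ζ ∈ deficiencySpace T c) (hζ' : ζ' ∈ deficiencySpace T (starRingEnd ℂ c))
    (hmem : ζ + ζ' ∈ T.domain) : ζ = 0 := by
  obtain ⟨hζdom, hζc⟩ := hζ
  obtain ⟨hζ'dom, hζ'c⟩ := hζ'
  have hTφ : T ⟨ζ + ζ', hmem⟩ = c • ζ + starRingEnd ℂ c • ζ' := by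
    rw [(hsymm.le_adjoint hdense).2 (y := ⟨ζ, hζdom⟩ + ⟨ζ', hζ'dom⟩) rfl, LinearPMap.map_add,
      hζc, hζ'c]
  have hinner := (adjoint_isFormalAdjoint hdense).symm ⟨ζ + ζ', hmem⟩ ⟨ζ, hζdom⟩
  simp only [hTφ, hζc, inner_add_left, inner_smul_left, inner_smul_right,
    Complex.conj_conj] at hinner
  have hself : (starRingEnd ℂ c - c) * ⟪ζ, ζ⟫_ℂ = 0 := by linear_combination hinner
  have hconj : starRingEnd ℂ c - c ≠ 0 := sub_ne_zero.mpr (mt Complex.conj_eq_iff_im.mp hc)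
  exact inner_self_eq_zero.mp ((mul_eq_zero.mp hself).resolve_left hconj)

end

theorem vonNeumann_extension_GInvariant_necessary_general {H : Type*} [NormedAddCommGroup H]
    [InnerProductSpace ℂ H] [CompleteSpace H] {G : Type*} [Group G]
    (V : G →* (H ≃ₗᵢ[ℂ] H)) (T : H →ₗ.[ℂ] H)
    (hdense : Dense (T.domain : Set H))
    (hsymm : ∀ x y : T.domain, ⟪T x, (y : H)⟫_ℂ = ⟪(x : H), T y⟫_ℂ)
    (hinv : GInvariant V T)
    (Np Nm : Submodule ℂ H)
    (hNp : (Np : Set H) = deficiencySpace T Complex.I)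
    (hNm : (Nm : Set H) = deficiencySpace T (-Complex.I))
    (K : Np ≃ₗᵢ[ℂ] Nm)
    (TK : H →ₗ.[ℂ] H)
    -- `D(T_K) = {φ + ξ + Kξ : φ ∈ D(T), ξ ∈ N₊}`
    (hTKdom : ∀ x : H, x ∈ TK.domain ↔
      ∃ φ ∈ T.domain, ∃ ξ : Np, x = φ + (ξ : H) + (K ξ : H))
    -- `T_K` is `G`-invariant
    (hTKinv : GInvariant V TK) :
    -- then `K` commutes with the representation `V`
    ∀ g : G, ∀ ξ : Np, ∃ hξ : V g (ξ : H) ∈ Np,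
      V g (K ξ : H) = (K ⟨V g (ξ : H), hξ⟩ : H) := by
  have hinvAdj := hinv.adjoint hdense
  intro g ξ
  have hmapsp : Set.MapsTo (V g) Np Np := hNp ▸ hinvAdj.mapsTo_deficiencySpace g _
  have hmapsm : Set.MapsTo (V g) Nm Nm := hNm ▸ hinvAdj.mapsTo_deficiencySpace g _
  have hVξ : V g ξ ∈ Np := hmapsp ξ.2
  have hx : (ξ : H) + K ξ ∈ TK.domain :=
    (hTKdom _).mpr ⟨0, T.domain.zero_mem, ξ, by rw [zero_add]⟩
  obtain ⟨φ, hφ, η, hdecomp⟩ := (hTKdom _).mp (hTKinv g ⟨_, hx⟩).1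
  have hp : V g ξ - η ∈ deficiencySpace T Complex.I := hNp ▸ Np.sub_mem hVξ η.2
  have hm : V g (K ξ) - K η ∈ deficiencySpace T (-Complex.I) :=
    hNm ▸ Nm.sub_mem (hmapsm (K ξ).2) (K η).2
  have hsum : (V g ξ - η) + (V g (K ξ) - K η) = φ := by
    rw [sub_add_sub_comm, ← _root_.map_add, hdecomp]; abel
  have hp0 := eq_zero_of_add_mem_domain_of_mem_deficiencySpace hdense hsymm
    (c := Complex.I) (by simp) hp (by rwa [Complex.conj_I]) (hsum ▸ hφ)
  have hm0 := eq_zero_of_add_mem_domain_of_mem_deficiencySpace hdense hsymm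
    (c := -Complex.I) (by simp) hm (by rwa [Complex.conj_neg_I]) (by rwa [add_comm, hsum])
  have hη : η = ⟨V g ξ, hVξ⟩ := Subtype.ext (sub_eq_zero.mp hp0).symm
  exact ⟨hVξ, hη ▸ sub_eq_zero.mp hm0⟩

/-- Von Neumann theory: let `T` be closed, symmetric and `G`-invariant, let
`K : N₊ → N₋` be a unitary between the deficiency spaces and `T_K` the corresponding
self-adjoint extension (the restriction of `T†` to `D(T) + (I + K) N₊`).  If `T_K`
is `G`-invariant, then `K` commutes with the representation `V`. -/
theorem vonNeumann_extension_GInvariant_necessary {H : Type*} [NormedAddCommGroup H]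
    [InnerProductSpace ℂ H] [CompleteSpace H] {G : Type*} [Group G]
    (V : G →* (H ≃ₗᵢ[ℂ] H)) (T : H →ₗ.[ℂ] H)
    (hdense : Dense (T.domain : Set H)) (hclosed : T.IsClosed)
    (hsymm : ∀ x y : T.domain, ⟪T x, (y : H)⟫_ℂ = ⟪(x : H), T y⟫_ℂ)
    (hinv : GInvariant V T)
    (Np Nm : Submodule ℂ H)
    (hNp : (Np : Set H) = deficiencySpace T Complex.I)
    (hNm : (Nm : Set H) = deficiencySpace T (-Complex.I))
    (K : Np ≃ₗᵢ[ℂ] Nm)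
    (TK : H →ₗ.[ℂ] H)
    -- `D(T_K) = {φ + ξ + Kξ : φ ∈ D(T), ξ ∈ N₊}`
    (hTKdom : ∀ x : H, x ∈ TK.domain ↔
      ∃ φ ∈ T.domain, ∃ ξ : Np, x = φ + (ξ : H) + (K ξ : H))
    -- `T_K` is the restriction of `T†` to this domain
    (hTKval : ∀ x : TK.domain, ∃ hx : (x : H) ∈ T.adjoint.domain,
      TK x = T.adjoint ⟨(x : H), hx⟩)
    -- `T_K` is `G`-invariant
    (hTKinv : GInvariant V TK) :
    -- then `K` commutes with the representation `V`
    ∀ g : G, ∀ ξ : Np, ∃ hξ : V g (ξ : H) ∈ Np,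
      V g (K ξ : H) = (K ⟨V g (ξ : H), hξ⟩ : H) :=
  vonNeumann_extension_GInvariant_necessary_general V T hdense hsymm hinv Np Nm hNp hNm K TK hTKdom
    hTKinv
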